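/- Characterization of good-window values (lower bound direction): in a finite non-stochastic game, for every vertex v and every i ≥ 1, Player 1 has a strategy such that against any Player-2 strategy, in the resulting play from v there exists 1 ≤ j ≤ i such that the total payoff of the first j edges is at least C_i(v). -/

import Mathlib

/-- A non-stochastic two-player game on a finite directed graph without deadlocks. -/
structure NSGame (V : Type) [DecidableEq V] [Fintype V] where
  E : V → Finset V
  nonempty : ∀ v, (E v).Nonempty
  isP1 : V → Bool
  w : V → V → ℚ

variable {V : Type} [DecidableEq V] [Fintype V]

/-- The good-window values `C_i(v)`. -/
def gwVal (G : NSGame V) : ℕ → V → ℚ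
  | 0, _ => 0
  | i + 1, v =>
    if G.isP1 v then
      ((G.E v).image fun v' => max (G.w v v') (G.w v v' + gwVal G i v')).max'
        ((G.nonempty v).image _)
    else
      ((G.E v).image fun v' => max (G.w v v') (G.w v v' + gwVal G i v')).min'
        ((G.nonempty v).image _)

/-- The history (as a list of vertices) after `n` steps, starting from `v`, when
Player 1 follows `σ1` and Player 2 follows `σ2` (each reads the full history). -/
def histList (G : NSGame V) (σ1 σ2 : List V → V) (v : V) : ℕ → List V
  | 0 => [v]
  | n + 1 =>
    let h := histList G σ1 σ2 v n
    h ++ [if G.isP1 (h.getLastD v) then σ1 h else σ2 h]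

/-- The vertex occupied at step `n` of the play from `v` under strategies `σ1, σ2`. -/
def playAt (G : NSGame V) (σ1 σ2 : List V → V) (v : V) (n : ℕ) : V :=
  (histList G σ1 σ2 v n).getLastD v

/-- A strategy is valid if it always chooses an out-neighbour of the current vertex. -/
def ValidStrat (G : NSGame V) (σ : List V → V) : Prop :=
  ∀ l : List V, ∀ u : V, l.getLast? = some u → σ l ∈ G.E u

noncomputable def pick (G : NSGame V) (m : ℕ) (u : V) : V :=
  (Finset.mem_image.1 (Finset.max'_mem
    ((G.E u).image fun v' => max (G.w u v') (G.w u v' + gwVal G m v'))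
    ((G.nonempty u).image _))).choose

lemma pick_mem (G : NSGame V) (m : ℕ) (u : V) : pick G m u ∈ G.E u :=
  (Finset.mem_image.1 (Finset.max'_mem
    ((G.E u).image fun v' => max (G.w u v') (G.w u v' + gwVal G m v'))
    ((G.nonempty u).image _))).choose_spec.1

lemma pick_spec (G : NSGame V) (m : ℕ) (u : V) :
    max (G.w u (pick G m u)) (G.w u (pick G m u) + gwVal G m (pick G m u)) =
      ((G.E u).image fun v' => max (G.w u v') (G.w u v' + gwVal G m v')).max'
        ((G.nonempty u).image _) :=
  (Finset.mem_image.1 (Finset.max'_mem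
    ((G.E u).image fun v' => max (G.w u v') (G.w u v' + gwVal G m v'))
    ((G.nonempty u).image _))).choose_spec.2

/-- Player 1's strategy: with history `l` (starting from `v`, target window `i`),
play the optimal choice for the remaining window `i - l.length` (so `i + 1 - l.length - 1`). -/
noncomputable def strat (G : NSGame V) (v : V) (i : ℕ) : List V → V :=
  fun l => pick G (i - l.length) (l.getLastD v)

lemma strat_valid (G : NSGame V) (v : V) (i : ℕ) : ValidStrat G (strat G v i) := by
  intro l u hu
  have : l.getLastD v = u := by rw [List.getLastD_eq_getLast?, hu]; rfl
  rw [strat, this]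
  exact pick_mem G _ u

lemma histList_length (G : NSGame V) (σ1 σ2 : List V → V) (v : V) (n : ℕ) :
    (histList G σ1 σ2 v n).length = n + 1 := by
  induction n with
  | zero => rfl
  | succ n ih => simp [histList, ih]

lemma histList_ne_nil (G : NSGame V) (σ1 σ2 : List V → V) (v : V) (n : ℕ) :
    histList G σ1 σ2 v n ≠ [] := by
  intro h
  have := histList_length G σ1 σ2 v n
  rw [h] at this; simp at this

lemma histList_getLast? (G : NSGame V) (σ1 σ2 : List V → V) (v : V) (n : ℕ) :
    (histList G σ1 σ2 v n).getLast? = some (playAt G σ1 σ2 v n) := by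
  rw [playAt, List.getLastD_eq_getLast?,
    List.getLast?_eq_getLast (histList_ne_nil G σ1 σ2 v n)]
  rfl

lemma playAt_succ (G : NSGame V) (σ1 σ2 : List V → V) (v : V) (n : ℕ) :
    playAt G σ1 σ2 v (n + 1) =
      (if G.isP1 (playAt G σ1 σ2 v n) then σ1 (histList G σ1 σ2 v n)
        else σ2 (histList G σ1 σ2 v n)) := by
  rw [playAt, histList]
  exact List.getLastD_concat


lemma step (G : NSGame V) (v : V) (i : ℕ) (σ2 : List V → V) (hσ2 : ValidStrat G σ2)
    (m n : ℕ) (hn : n + (m + 1) = i) :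
    gwVal G (m + 1) (playAt G (strat G v i) σ2 v n) ≤
      max (G.w (playAt G (strat G v i) σ2 v n) (playAt G (strat G v i) σ2 v (n + 1)))
        (G.w (playAt G (strat G v i) σ2 v n) (playAt G (strat G v i) σ2 v (n + 1)) +
          gwVal G m (playAt G (strat G v i) σ2 v (n + 1))) := by
  set u := playAt G (strat G v i) σ2 v n with hu
  have hlast : (histList G (strat G v i) σ2 v n).getLastD v = u := rfl
  have hlen : (histList G (strat G v i) σ2 v n).length = n + 1 :=
    histList_length G _ σ2 v n
  by_cases hP : G.isP1 u
  · have hnext : playAt G (strat G v i) σ2 v (n + 1) = pick G m u := by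
      rw [playAt_succ, if_pos hP, strat, hlast, hlen, show i - (n + 1) = m from by omega]
    rw [hnext]
    have : gwVal G (m + 1) u =
        max (G.w u (pick G m u)) (G.w u (pick G m u) + gwVal G m (pick G m u)) := by
      rw [gwVal, if_pos hP, ← pick_spec G m u]
    exact le_of_eq this
  · have hnext : playAt G (strat G v i) σ2 v (n + 1) = σ2 (histList G (strat G v i) σ2 v n) := by
      rw [playAt_succ, if_neg hP]
    have hmem : σ2 (histList G (strat G v i) σ2 v n) ∈ G.E u :=
      hσ2 _ u (histList_getLast? G _ σ2 v n)
    rw [hnext]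
    have : gwVal G (m + 1) u ≤
        max (G.w u (σ2 (histList G (strat G v i) σ2 v n)))
          (G.w u (σ2 (histList G (strat G v i) σ2 v n)) +
            gwVal G m (σ2 (histList G (strat G v i) σ2 v n))) := by
      rw [gwVal, if_neg hP]
      exact Finset.min'_le _ _ (Finset.mem_image_of_mem _ hmem)
    exact this

lemma key (G : NSGame V) (v : V) (i : ℕ) (σ2 : List V → V) (hσ2 : ValidStrat G σ2) :
    ∀ m n, n + (m + 1) = i →
      ∃ j, 1 ≤ j ∧ j ≤ m + 1 ∧
        gwVal G (m + 1) (playAt G (strat G v i) σ2 v n) ≤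
          ∑ k ∈ Finset.range j,
            G.w (playAt G (strat G v i) σ2 v (n + k))
              (playAt G (strat G v i) σ2 v (n + k + 1)) := by
  intro m
  induction m with
  | zero =>
    intro n hn
    refine ⟨1, le_refl 1, le_refl 1, ?_⟩
    have h := step G v i σ2 hσ2 0 n hn
    rw [show gwVal G 0 (playAt G (strat G v i) σ2 v (n + 1)) = 0 from rfl,
      add_zero, max_self] at h
    simpa using h
  | succ m ih =>
    intro n hn
    have h := step G v i σ2 hσ2 (m + 1) n hn
    set u := playAt G (strat G v i) σ2 v n
    set u' := playAt G (strat G v i) σ2 v (n + 1)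
    rcases le_or_gt (gwVal G (m + 1 + 1) u) (G.w u u') with h1 | h1
    · exact ⟨1, le_refl 1, by omega, by simpa using h1⟩
    · have h2 : gwVal G (m + 1 + 1) u ≤ G.w u u' + gwVal G (m + 1) u' := by
        rcases max_cases (G.w u u') (G.w u u' + gwVal G (m + 1) u') with hc | hc
        · rw [hc.1] at h; linarith
        · rw [hc.1] at h; exact h
      obtain ⟨j', hj'1, hj'2, hj'⟩ := ih (n + 1) (by omega)
      refine ⟨j' + 1, by omega, by omega, ?_⟩
      rw [Finset.sum_range_succ']
      have hsum : ∑ k ∈ Finset.range j',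
            G.w (playAt G (strat G v i) σ2 v (n + (k + 1)))
              (playAt G (strat G v i) σ2 v (n + (k + 1) + 1)) =
          ∑ k ∈ Finset.range j',
            G.w (playAt G (strat G v i) σ2 v (n + 1 + k))
              (playAt G (strat G v i) σ2 v (n + 1 + k + 1)) :=
        Finset.sum_congr rfl fun k _ => by
          rw [show n + (k + 1) = n + 1 + k from by omega]
      rw [hsum]
      simp only [add_zero]
      linarith

/-- Lower-bound characterization of the good-window values: Player 1 has a strategy
guaranteeing, against every Player-2 strategy, some `1 ≤ j ≤ i` with total payoff of
the first `j` edges at least `C_i(v)`. -/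
theorem stmt_15 (G : NSGame V) (v : V) (i : ℕ) (hi : 1 ≤ i) :
    ∃ σ1 : List V → V, ValidStrat G σ1 ∧
      ∀ σ2 : List V → V, ValidStrat G σ2 →
        ∃ j, 1 ≤ j ∧ j ≤ i ∧
          gwVal G i v ≤
            ∑ k ∈ Finset.range j,
              G.w (playAt G σ1 σ2 v k) (playAt G σ1 σ2 v (k + 1)) := by
  refine ⟨strat G v i, strat_valid G v i, ?_⟩
  intro σ2 hσ2
  obtain ⟨m, rfl⟩ : ∃ m, i = m + 1 := ⟨i - 1, by omega⟩
  obtain ⟨j, hj1, hj2, hj⟩ := key G v (m + 1) σ2 hσ2 m 0 (by omega)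
  refine ⟨j, hj1, hj2, ?_⟩
  have hv0 : playAt G (strat G v (m + 1)) σ2 v 0 = v := rfl
  simpa [hv0] using hj
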